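/- For every u ∈ M and every integer N ≥ 1, the following identity holds in M ⊗ F: c̃^N(u ⊗ f_0) = (A^{(N)} u) ⊗ f_0 + ∑_{j=1}^{n} (B_j^{(N)} u) ⊗ f_j, where A^{(N)} u and B_j^{(N)} u denote the actions of the elements A^{(N)}, B_j^{(N)} ∈ U(𝔤) on u. -/

import Mathlib

set_option maxHeartbeats 1000000
set_option synthInstance.maxHeartbeats 400000
set_option maxRecDepth 8000

noncomputable section

open scoped BigOperators TensorProduct
open Matrix

attribute [local instance 100] LieRing.ofAssociativeRing

/-- The Lie algebra 𝔬(n+1,ℂ) of skew-symmetric complex matrices. -/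
abbrev so (n : ℕ) : LieSubalgebra ℂ (Matrix (Fin (n+1)) (Fin (n+1)) ℂ) :=
  skewAdjointMatricesLieSubalgebra (1 : Matrix (Fin (n+1)) (Fin (n+1)) ℂ)

/-- The universal enveloping algebra U(𝔬(n+1,ℂ)). -/
abbrev Ug (n : ℕ) := UniversalEnvelopingAlgebra ℂ (so n)

/-- The matrix X_{ij} = E_{ij} - E_{ji}. -/
def Xmat (n : ℕ) (i j : Fin (n+1)) : Matrix (Fin (n+1)) (Fin (n+1)) ℂ :=
  Matrix.single i j 1 - Matrix.single j i 1

lemma Xmat_mem (n : ℕ) (i j : Fin (n+1)) : Xmat n i j ∈ so n := by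
  rw [mem_skewAdjointMatricesLieSubalgebra, mem_skewAdjointMatricesSubmodule]
  show (Xmat n i j)ᵀ * 1 = 1 * (-(Xmat n i j))
  rw [Matrix.mul_one, Matrix.one_mul]
  have h : ∀ (a b : Fin (n+1)), (Matrix.single a b (1:ℂ))ᵀ = Matrix.single b a 1 := by
    intro a b; ext x y
    simp [Matrix.single, Matrix.transpose_apply, and_comm]
  simp [Xmat, Matrix.transpose_sub, h]

/-- X_{ij} as an element of 𝔬(n+1,ℂ). -/
def Xel (n : ℕ) (i j : Fin (n+1)) : so n := ⟨Xmat n i j, Xmat_mem n i j⟩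

/-- X_{ij} as an element of U(𝔬(n+1,ℂ)). -/
def XU (n : ℕ) (i j : Fin (n+1)) : Ug n :=
  UniversalEnvelopingAlgebra.ι ℂ (Xel n i j)
/-- The pair (A^{(N+1)}, B^{(N+1)}) defined by the mutual recursion
A^{(1)} := 0, B_j^{(1)} := X_{0j},
A^{(N+1)} := ∑_{k=1}^n X_{k0} B_k^{(N)},
B_j^{(N+1)} := X_{0j} A^{(N)} + ∑_{k=1}^n X_{kj} B_k^{(N)}. -/
def AB (n : ℕ) : ℕ → Ug n × (Fin n → Ug n)
  | 0 => (0, fun j => XU n 0 j.succ)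
  | (N+1) => (∑ k : Fin n, XU n k.succ 0 * (AB n N).2 k,
      fun j => XU n 0 j.succ * (AB n N).1 + ∑ k : Fin n, XU n k.succ j.succ * (AB n N).2 k)

/-- A^{(ℓ)} for ℓ ≥ 1 (with junk value 0 at ℓ = 0). -/
def Ael (n : ℕ) : ℕ → Ug n
  | 0 => 0
  | (N+1) => (AB n N).1

/-- B_j^{(ℓ)} for ℓ ≥ 1 (with junk value 0 at ℓ = 0). -/
def Bel (n : ℕ) : ℕ → Fin n → Ug n
  | 0 => fun _ => 0
  | (N+1) => (AB n N).2

/-- `Ech n m j t` is the iterated sum ∑_{i_1,…,i_{m-1}=1}^{n}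
X_{i_{m-1} t} X_{i_{m-2} i_{m-1}} ⋯ X_{i_1 i_2} X_{j i_1} with m factors
(junk value 1 at m = 0). -/
def Ech (n : ℕ) : ℕ → Fin (n+1) → Fin (n+1) → Ug n
  | 0, _, _ => 1
  | 1, j, t => XU n j t
  | (m+2), j, t => ∑ k : Fin n, XU n k.succ t * Ech n (m+1) j k.succ

/-- D_j^{(ℓ)} = ∑_{i_1,…,i_{ℓ−1}=1}^{n} X_{i_{ℓ−1} 0} ⋯ X_{i_1 i_2} X_{j i_1};
in particular D_j^{(1)} = X_{j0}. -/
def Del (n : ℕ) (ℓ : ℕ) (j : Fin n) : Ug n := Ech n ℓ j.succ 0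

/-- C^{(ℓ)} = ∑_{j_1,…,j_{ℓ-1}=1}^{n} X_{j_{ℓ-1} 0} ⋯ X_{j_1 j_2} X_{0 j_1}. -/
def Cel (n : ℕ) (ℓ : ℕ) : Ug n := Ech n ℓ 0 0

/-- 𝒟^{ℓ,N} = ∑_{j=1}^n D_j^{(ℓ)} B_j^{(N)}. -/
def DD (n : ℕ) (ℓ N : ℕ) : Ug n := ∑ j : Fin n, Del n ℓ j * Bel n N j

/-- The Casimir element c_G = −∑_{0 ≤ i < j ≤ n} X_{ij}². -/
def casG (n : ℕ) : Ug n := -∑ i : Fin (n+1), ∑ j ∈ Finset.Ioi i, (XU n i j)^2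

/-- The Casimir element c_{G'} = −∑_{1 ≤ i < j ≤ n} X_{ij}². -/
def casG' (n : ℕ) : Ug n := -∑ a : Fin n, ∑ b ∈ Finset.Ioi a, (XU n a.succ b.succ)^2


/-- F = ℂ^{n+1}, the standard representation space. -/
abbrev Fstd (n : ℕ) := Fin (n+1) → ℂ

/-- The standard basis vector f_j of F = ℂ^{n+1}. -/
def fvec (n : ℕ) (j : Fin (n+1)) : Fstd n := Pi.single j 1

section ModuleSetup

variable (n : ℕ) (M : Type*) [AddCommGroup M] [Module ℂ M]
  [Module (Ug n) M] [IsScalarTower ℂ (Ug n) M]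

/-- The action of an element x ∈ U(𝔤) on the module M, as a ℂ-linear endomorphism. -/
def actM (x : Ug n) : Module.End ℂ M where
  toFun u := x • u
  map_add' := smul_add x
  map_smul' c u := smul_comm x c u

/-- The diagonal action of X ∈ 𝔬(n+1,ℂ) on M ⊗ F :
X·(u⊗f) := (X·u)⊗f + u⊗(Xf), where X acts on M through ι : 𝔤 → U(𝔤)
and on F = ℂ^{n+1} by matrix multiplication. -/
def actT (X : so n) : Module.End ℂ (M ⊗[ℂ] Fstd n) :=
  LinearMap.rTensor (Fstd n) (actM n M (UniversalEnvelopingAlgebra.ι ℂ X)) +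
  LinearMap.lTensor M (Matrix.mulVecLin (X : Matrix (Fin (n+1)) (Fin (n+1)) ℂ))

/-- The Casimir operator 𝒞(t) = −∑_{0 ≤ i < j ≤ n} X_{ij}·(X_{ij}·t) on M ⊗ F. -/
def CasT : Module.End ℂ (M ⊗[ℂ] Fstd n) :=
  -∑ i : Fin (n+1), ∑ j ∈ Finset.Ioi i, actT n M (Xel n i j) * actT n M (Xel n i j)

/-- The shifted Casimir operator c̃(t) = ½(𝒞(t) − (κ+n)·t) on M ⊗ F. -/
def ctil (κ : ℂ) : Module.End ℂ (M ⊗[ℂ] Fstd n) :=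
  (1/2 : ℂ) • (CasT n M - (κ + n) • 1)

end ModuleSetup


section Aux

lemma Xmat_mulVec' (n : ℕ) (i j t : Fin (n+1)) :
    Xmat n i j *ᵥ fvec n t =
      (if t = j then fvec n i else 0) - (if t = i then fvec n j else 0) := by
  ext k
  simp only [Xmat, fvec, Matrix.sub_mulVec, Matrix.mulVec_single, Pi.sub_apply,
    Matrix.sub_apply, Matrix.single, Matrix.of_apply]
  by_cases h1 : t = j <;> by_cases h2 : t = i <;>
    simp [h1, h2, Pi.single_apply, eq_comm] <;> aesop

lemma XU_diag (n : ℕ) (i : Fin (n+1)) : XU n i i = 0 := by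
  have h : Xel n i i = 0 := Subtype.ext (by simp [Xel, Xmat])
  rw [XU, h, map_zero]

lemma XU_antisym (n : ℕ) (i j : Fin (n+1)) : XU n j i = -XU n i j := by
  have h : Xel n j i = -Xel n i j := Subtype.ext (by
    show Xmat n j i = -Xmat n i j
    simp only [Xmat]; abel)
  rw [XU, h, map_neg]; rfl

lemma Xmat_sq_mulVec (n : ℕ) (i j t : Fin (n+1)) (h : i ≠ j) :
    Xmat n i j *ᵥ (Xmat n i j *ᵥ fvec n t) =
      (-((if t = i then 1 else 0) + (if t = j then 1 else 0) : ℂ)) • fvec n t := by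
  by_cases h1 : t = i <;> by_cases h2 : t = j
  · exact absurd (h1.symm.trans h2) h
  · subst h1
    simp [Xmat_mulVec', h2, Ne.symm h2, Matrix.mulVec_sub, Matrix.mulVec_neg]
  · subst h2
    simp [Xmat_mulVec', h1, Ne.symm h1, Matrix.mulVec_sub, Matrix.mulVec_neg]
  · simp [Xmat_mulVec', h1, h2]

section ModuleAux

variable (n : ℕ) (M : Type*) [AddCommGroup M] [Module ℂ M]
  [Module (Ug n) M] [IsScalarTower ℂ (Ug n) M]

lemma actT_tmul (X : so n) (u : M) (f : Fstd n) :
    actT n M X (u ⊗ₜ[ℂ] f) =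
      (UniversalEnvelopingAlgebra.ι ℂ X • u) ⊗ₜ[ℂ] f +
        u ⊗ₜ[ℂ] ((X : Matrix (Fin (n+1)) (Fin (n+1)) ℂ) *ᵥ f) := by
  simp [actT, actM, LinearMap.add_apply, Matrix.mulVecLin_apply]

lemma actT_actT_tmul (i j : Fin (n+1)) (u : M) (t : Fin (n+1)) :
    actT n M (Xel n i j) (actT n M (Xel n i j) (u ⊗ₜ[ℂ] fvec n t)) =
      ((XU n i j * XU n i j) • u) ⊗ₜ[ℂ] fvec n t +
        ((XU n i j • u) ⊗ₜ[ℂ] (Xmat n i j *ᵥ fvec n t) +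
         (XU n i j • u) ⊗ₜ[ℂ] (Xmat n i j *ᵥ fvec n t)) +
        u ⊗ₜ[ℂ] (Xmat n i j *ᵥ (Xmat n i j *ᵥ fvec n t)) := by
  rw [actT_tmul, map_add, actT_tmul, actT_tmul]
  have hX : ((Xel n i j : so n) : Matrix (Fin (n+1)) (Fin (n+1)) ℂ) = Xmat n i j := rfl
  have hXU : UniversalEnvelopingAlgebra.ι ℂ (Xel n i j) = XU n i j := rfl
  rw [hX, hXU, mul_smul]
  abel

lemma cross_sum (u : M) (t : Fin (n+1)) :
    ∑ i : Fin (n+1), ∑ j ∈ Finset.Ioi i,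
        (XU n i j • u) ⊗ₜ[ℂ] (Xmat n i j *ᵥ fvec n t) =
      -∑ i : Fin (n+1), (XU n t i • u) ⊗ₜ[ℂ] fvec n i := by
  have step1 : ∀ i j : Fin (n+1),
      (XU n i j • u) ⊗ₜ[ℂ] (Xmat n i j *ᵥ fvec n t) =
        (if t = j then (XU n i j • u) ⊗ₜ[ℂ] fvec n i else 0) -
        (if t = i then (XU n i j • u) ⊗ₜ[ℂ] fvec n j else 0) := by
    intro i j
    rw [Xmat_mulVec']
    by_cases h1 : t = j <;> by_cases h2 : t = i
    · subst h1; subst h2; simp [TensorProduct.tmul_sub]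
    · subst h1; simp [h2, TensorProduct.tmul_sub, TensorProduct.tmul_neg]
    · subst h2; simp [h1, TensorProduct.tmul_sub, TensorProduct.tmul_neg]
    · simp [h1, h2]
  simp only [step1]
  rw [Finset.sum_congr rfl (fun i _ => Finset.sum_sub_distrib _ _), Finset.sum_sub_distrib]
  have e1 : ∀ i : Fin (n+1),
      (∑ j ∈ Finset.Ioi i, if t = j then (XU n i j • u) ⊗ₜ[ℂ] fvec n i else 0) =
        if i ∈ Finset.Iio t then (XU n i t • u) ⊗ₜ[ℂ] fvec n i else 0 := by
    intro i
    rw [Finset.sum_ite_eq]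
    by_cases hi : i < t
    · rw [if_pos (Finset.mem_Ioi.mpr hi), if_pos (Finset.mem_Iio.mpr hi)]
    · rw [if_neg (fun hc => hi (Finset.mem_Ioi.mp hc)),
        if_neg (fun hc => hi (Finset.mem_Iio.mp hc))]
  have e2 : ∀ i : Fin (n+1),
      (∑ j ∈ Finset.Ioi i, if t = i then (XU n i j • u) ⊗ₜ[ℂ] fvec n j else 0) =
        if t = i then ∑ j ∈ Finset.Ioi i, (XU n i j • u) ⊗ₜ[ℂ] fvec n j else 0 := by
    intro i
    split_ifs <;> simp
  simp only [e1, e2]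
  rw [Finset.sum_ite_mem, Finset.univ_inter, Finset.sum_ite_eq]
  simp only [Finset.mem_univ, if_true]
  have e3 : ∀ i : Fin (n+1), (XU n i t • u) ⊗ₜ[ℂ] fvec n i =
      -((XU n t i • u) ⊗ₜ[ℂ] fvec n i) := by
    intro i
    rw [XU_antisym, neg_smul, TensorProduct.neg_tmul]
  simp only [e3, Finset.sum_neg_distrib]
  have e4 : ∑ i : Fin (n+1), (XU n t i • u) ⊗ₜ[ℂ] fvec n i =
      (∑ i ∈ Finset.Iio t, (XU n t i • u) ⊗ₜ[ℂ] fvec n i) +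
      ∑ i ∈ Finset.Ioi t, (XU n t i • u) ⊗ₜ[ℂ] fvec n i := by
    rw [← Finset.sum_union (by
      simp only [Finset.disjoint_left, Finset.mem_Iio, Finset.mem_Ioi]
      exact fun a ha hb => lt_irrefl a (ha.trans hb))]
    rw [← Finset.sum_erase Finset.univ (a := t) (by simp [XU_diag])]
    apply Finset.sum_congr _ (fun _ _ => rfl)
    ext i
    simp only [Finset.mem_union, Finset.mem_Iio, Finset.mem_Ioi, Finset.mem_erase,
      Finset.mem_univ, and_true]
    exact ne_iff_lt_or_gt
  rw [e4]
  abel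

lemma count_sum (t : Fin (n+1)) :
    ∑ i : Fin (n+1), ∑ j ∈ Finset.Ioi i,
      (((if t = i then 1 else 0) + (if t = j then 1 else 0)) : ℂ) = n := by
  simp only [Finset.sum_add_distrib]
  have e1 : ∀ i : Fin (n+1), (∑ _j ∈ Finset.Ioi i, ((if t = i then 1 else 0) : ℂ)) =
      if t = i then ((Finset.Ioi i).card : ℂ) else 0 := by
    intro i; rw [Finset.sum_const]; split_ifs <;> simp
  have e2 : ∀ i : Fin (n+1), (∑ j ∈ Finset.Ioi i, ((if t = j then 1 else 0) : ℂ)) =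
      if i ∈ Finset.Iio t then 1 else 0 := by
    intro i
    rw [Finset.sum_ite_eq]
    by_cases hi : i < t
    · rw [if_pos (Finset.mem_Ioi.mpr hi), if_pos (Finset.mem_Iio.mpr hi)]
    · rw [if_neg (fun hc => hi (Finset.mem_Ioi.mp hc)),
        if_neg (fun hc => hi (Finset.mem_Iio.mp hc))]
  simp only [e1, e2]
  rw [Finset.sum_ite_eq, Finset.sum_ite_mem, Finset.univ_inter]
  simp only [Finset.mem_univ, if_true, Finset.sum_const, nsmul_eq_mul, mul_one]
  rw [Fin.card_Ioi, Fin.card_Iio, ← Nat.cast_add]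
  have ht : (t : ℕ) ≤ n := Fin.is_le t
  norm_cast
  omega

lemma CasT_tmul (κ : ℂ) (hκ : ∀ u : M, casG n • u = κ • u) (u : M) (t : Fin (n+1)) :
    CasT n M (u ⊗ₜ[ℂ] fvec n t) =
      (κ + n) • (u ⊗ₜ[ℂ] fvec n t) +
        (2 : ℂ) • ∑ i : Fin (n+1), (XU n t i • u) ⊗ₜ[ℂ] fvec n i := by
  rw [CasT]
  simp only [LinearMap.neg_apply, LinearMap.sum_apply, Module.End.mul_apply]
  have hterm : ∀ i : Fin (n+1), ∀ j ∈ Finset.Ioi i,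
      actT n M (Xel n i j) (actT n M (Xel n i j) (u ⊗ₜ[ℂ] fvec n t)) =
        ((XU n i j * XU n i j) • u) ⊗ₜ[ℂ] fvec n t +
          ((XU n i j • u) ⊗ₜ[ℂ] (Xmat n i j *ᵥ fvec n t) +
           (XU n i j • u) ⊗ₜ[ℂ] (Xmat n i j *ᵥ fvec n t)) +
          u ⊗ₜ[ℂ] ((-((if t = i then 1 else 0) + (if t = j then 1 else 0) : ℂ)) • fvec n t) := by
    intro i j hj
    rw [actT_actT_tmul, Xmat_sq_mulVec n i j t (Finset.mem_Ioi.mp hj).ne]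
  rw [Finset.sum_congr rfl (fun i _ => Finset.sum_congr rfl (hterm i))]
  simp only [Finset.sum_add_distrib]
  have S1 : ∑ i : Fin (n+1), ∑ j ∈ Finset.Ioi i,
      ((XU n i j * XU n i j) • u) ⊗ₜ[ℂ] fvec n t = (-(κ • u)) ⊗ₜ[ℂ] fvec n t := by
    simp only [← TensorProduct.sum_tmul, ← Finset.sum_smul, ← sq]
    have hc : (∑ i : Fin (n+1), ∑ j ∈ Finset.Ioi i, (XU n i j)^2) = -casG n := by
      rw [casG, neg_neg]
    rw [hc, neg_smul, hκ u]
  have S3 : ∑ i : Fin (n+1), ∑ j ∈ Finset.Ioi i,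
      u ⊗ₜ[ℂ] ((-((if t = i then 1 else 0) + (if t = j then 1 else 0) : ℂ)) • fvec n t) =
        u ⊗ₜ[ℂ] ((-(n : ℂ)) • fvec n t) := by
    simp only [← TensorProduct.tmul_sum]
    congr 1
    simp only [neg_smul, Finset.sum_neg_distrib, ← Finset.sum_smul]
    rw [count_sum]
  rw [S1, S3, cross_sum]
  simp only [TensorProduct.neg_tmul, ← TensorProduct.smul_tmul', TensorProduct.tmul_smul]
  module

lemma ctil_tmul (κ : ℂ) (hκ : ∀ u : M, casG n • u = κ • u) (u : M) (t : Fin (n+1)) :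
    ctil n M κ (u ⊗ₜ[ℂ] fvec n t) =
      ∑ i : Fin (n+1), (XU n t i • u) ⊗ₜ[ℂ] fvec n i := by
  rw [ctil]
  simp only [LinearMap.smul_apply, LinearMap.sub_apply, Module.End.one_apply,
    LinearMap.smul_apply]
  rw [CasT_tmul n M κ hκ u t]
  rw [add_sub_cancel_left, smul_smul]
  norm_num

end ModuleAux

end Aux

/-- Let M be a U(𝔬(n+1,ℂ))-module on which the Casimir element c_G acts by the scalar κ.
Then for every u ∈ M and every integer N ≥ 1 one has, in M ⊗ F,
c̃^N(u ⊗ f_0) = (A^{(N)} u) ⊗ f_0 + ∑_{j=1}^{n} (B_j^{(N)} u) ⊗ f_j. -/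
theorem ctil_pow_apply (n : ℕ) (M : Type*) [AddCommGroup M] [Module ℂ M]
    [Module (Ug n) M] [IsScalarTower ℂ (Ug n) M] (κ : ℂ)
    (hκ : ∀ u : M, casG n • u = κ • u) (u : M) (N : ℕ) (hN : 1 ≤ N) :
    (ctil n M κ ^ N) (u ⊗ₜ[ℂ] fvec n 0) =
      (Ael n N • u) ⊗ₜ[ℂ] fvec n 0 +
      ∑ j : Fin n, (Bel n N j • u) ⊗ₜ[ℂ] fvec n j.succ := by
  
  obtain ⟨N, rfl⟩ : ∃ m, N = m + 1 := ⟨N - 1, by omega⟩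
  clear hN
  induction N generalizing u with
  | zero =>
      rw [pow_one, ctil_tmul n M κ hκ u 0, Fin.sum_univ_succ]
      simp [Ael, Bel, AB, XU_diag]
  | succ N ih =>
      rw [pow_succ', Module.End.mul_apply, ih u, map_add, map_sum,
        ctil_tmul n M κ hκ _ 0]
      simp only [fun j : Fin n => ctil_tmul n M κ hκ (Bel n (N+1) j • u) j.succ]
      have hA : Ael n (N + 1 + 1) = ∑ k : Fin n, XU n k.succ 0 * Bel n (N+1) k := rfl
      have hB : ∀ k : Fin n, Bel n (N + 1 + 1) k =
          XU n 0 k.succ * Ael n (N+1) + ∑ j : Fin n, XU n j.succ k.succ * Bel n (N+1) j := by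
        intro k; rfl
      simp only [hA, hB, Finset.sum_smul, add_smul, mul_smul,
        TensorProduct.sum_tmul, TensorProduct.add_tmul]
      rw [Fin.sum_univ_succ (f := fun i => (XU n 0 i • Ael n (N+1) • u) ⊗ₜ[ℂ] fvec n i)]
      rw [Finset.sum_congr rfl (fun j _ =>
        Fin.sum_univ_succ (f := fun i => (XU n j.succ i • Bel n (N+1) j • u) ⊗ₜ[ℂ] fvec n i))]
      simp only [XU_diag, zero_smul, TensorProduct.zero_tmul, zero_add,
        Finset.sum_add_distrib]
      rw [Finset.sum_comm (f := fun (j : Fin n) (k : Fin n) =>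
        (XU n j.succ k.succ • Bel n (N+1) j • u) ⊗ₜ[ℂ] fvec n k.succ)]
      abel
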